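/- arXiv:1812.04176 — 2 statements merged into one kernel-verified Lean document; each statement's English description precedes it below -/
import Mathlib

section
/- There exist universal constants a5 > 0 and a6 > 0 such that the following holds. Suppose each weight matrix W_i satisfies the WDC with constant ε, A satisfies the RRIC with respect to G with constant ε, ε < 1/(16πd²)², and the noise satisfies ‖e‖ ≤ a5 · 2^{−d/2} · ‖x_*‖. Then for every nonzero x ∈ ℝ^k at which G is differentiable, ‖ṽ_x‖ ≤ (a6 · d / 2^d) · max(‖x‖, ‖x_*‖). -/
open scoped BigOperators NNReal
open Real Finset Matrix
open scoped Matrix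

noncomputable section

namespace CSGen

/-- Euclidean norm of a vector in `ℝ^m`. -/
def enorm {m : ℕ} (v : Fin m → ℝ) : ℝ := Real.sqrt (∑ i, (v i) ^ 2)

/-- Euclidean inner product. -/
def dotp {m : ℕ} (u v : Fin m → ℝ) : ℝ := ∑ i, u i * v i

/-- `relu` applied entrywise. -/
def relu {m : ℕ} (v : Fin m → ℝ) : Fin m → ℝ := fun i => max (v i) 0

/-- Zero out the rows of `W` at which the vector `v` is not positive. -/
def rowFilter {n k : ℕ} (W : Matrix (Fin n) (Fin k) ℝ) (v : Fin n → ℝ) :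
    Matrix (Fin n) (Fin k) ℝ := fun i j => if 0 < v i then W i j else 0

/-- `W_{+,x} = diag(Wx > 0) W`. -/
def posPart {n k : ℕ} (W : Matrix (Fin n) (Fin k) ℝ) (x : Fin k → ℝ) :
    Matrix (Fin n) (Fin k) ℝ := rowFilter W (W.mulVec x)

/-- Spectral norm of a matrix (operator norm w.r.t. Euclidean norms). -/
def specNorm {n k : ℕ} (M : Matrix (Fin n) (Fin k) ℝ) : ℝ :=
  ‖LinearMap.toContinuousLinearMap (Matrix.toEuclideanLin M)‖

/-- The angle `∠(x,y) = arccos(⟨x,y⟩/(‖x‖‖y‖))`. -/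
def ang {k : ℕ} (x y : Fin k → ℝ) : ℝ :=
  Real.arccos (dotp x y / (enorm x * enorm y))

/-- The matrix of the linear map `M_{x̂↔ŷ}` sending `x̂ ↦ ŷ`, `ŷ ↦ x̂`, and
`z ↦ 0` for `z ⊥ span{x,y}`. -/
def swapMat {k : ℕ} (x y : Fin k → ℝ) : Matrix (Fin k) (Fin k) ℝ :=
  let xh := (enorm x)⁻¹ • x
  let yh := (enorm y)⁻¹ • y
  let c := dotp xh yh
  if c = 1 then Matrix.vecMulVec xh xh
  else if c = -1 then -(Matrix.vecMulVec xh xh)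
  else (1 - c ^ 2)⁻¹ •
    (Matrix.vecMulVec xh yh + Matrix.vecMulVec yh xh
      - c • (Matrix.vecMulVec xh xh + Matrix.vecMulVec yh yh))

/-- The matrix `Q_{x,y}`. -/
def Qmat {k : ℕ} (x y : Fin k → ℝ) : Matrix (Fin k) (Fin k) ℝ :=
  ((π - ang x y) / (2 * π)) • (1 : Matrix (Fin k) (Fin k) ℝ)
    + (Real.sin (ang x y) / (2 * π)) • swapMat x y

/-- The Weight Distribution Condition with constant `ε`. -/
def WDC {n k : ℕ} (W : Matrix (Fin n) (Fin k) ℝ) (ε : ℝ) : Prop :=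
  ∀ x y : Fin k → ℝ, x ≠ 0 → y ≠ 0 →
    specNorm ((posPart W x)ᵀ * posPart W y - Qmat x y) ≤ ε

/-- The Range Restricted Isometry Condition of `A` with respect to `G`,
with constant `ε`. -/
def RRIC {m nd k : ℕ} (A : Matrix (Fin m) (Fin nd) ℝ)
    (G : (Fin k → ℝ) → (Fin nd → ℝ)) (ε : ℝ) : Prop :=
  ∀ x1 x2 x3 x4 : Fin k → ℝ,
    |dotp (A.mulVec (G x1 - G x2)) (A.mulVec (G x3 - G x4))
        - dotp (G x1 - G x2) (G x3 - G x4)|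
      ≤ ε * enorm (G x1 - G x2) * enorm (G x3 - G x4)

/-- Output of the `j`-th layer of the network:
`feat n W d = G = relu(W_d ⋯ relu(W_1 x) ⋯)`. -/
def feat (n : ℕ → ℕ) (W : ∀ i : ℕ, Matrix (Fin (n (i + 1))) (Fin (n i)) ℝ) :
    (j : ℕ) → (Fin (n 0) → ℝ) → (Fin (n j) → ℝ)
  | 0, x => x
  | (j + 1), x => relu ((W j).mulVec (feat n W j x))

/-- The matrix product `∏_{i=j}^{1} W_{i,+,x}`. -/
def lam (n : ℕ → ℕ) (W : ∀ i : ℕ, Matrix (Fin (n (i + 1))) (Fin (n i)) ℝ) :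
    (j : ℕ) → (Fin (n 0) → ℝ) → Matrix (Fin (n j)) (Fin (n 0)) ℝ
  | 0, _ => 1
  | (j + 1), x => rowFilter (W j) ((W j).mulVec (feat n W j x)) * lam n W j x

/-- The empirical risk `f(x) = (1/2)‖A G(x) − (A G(x_*) + e)‖²`. -/
def fobj {m : ℕ} (n : ℕ → ℕ) (W : ∀ i : ℕ, Matrix (Fin (n (i + 1))) (Fin (n i)) ℝ)
    (d : ℕ) (A : Matrix (Fin m) (Fin (n d)) ℝ) (xs : Fin (n 0) → ℝ) (e : Fin m → ℝ)
    (x : Fin (n 0) → ℝ) : ℝ :=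
  (1 / 2) * (enorm (A.mulVec (feat n W d x) - (A.mulVec (feat n W d xs) + e))) ^ 2

/-- `ṽ_x = (∏ W_{i,+,x})ᵀ Aᵀ (A (∏ W_{i,+,x}) x − y)`. -/
def vtil {m : ℕ} (n : ℕ → ℕ) (W : ∀ i : ℕ, Matrix (Fin (n (i + 1))) (Fin (n i)) ℝ)
    (d : ℕ) (A : Matrix (Fin m) (Fin (n d)) ℝ) (xs : Fin (n 0) → ℝ) (e : Fin m → ℝ)
    (x : Fin (n 0) → ℝ) : Fin (n 0) → ℝ :=
  Matrix.mulVec (lam n W d x)ᵀ (Matrix.mulVec Aᵀ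
    (A.mulVec ((lam n W d x).mulVec x) - (A.mulVec (feat n W d xs) + e)))

/-- `g(θ) = arccos((1/π)[(π−θ)cos θ + sin θ])`. -/
def gfun (θ : ℝ) : ℝ := Real.arccos ((1 / π) * ((π - θ) * Real.cos θ + Real.sin θ))

/-- `θ̄_{i,x,y}`. -/
def thetaBar {k : ℕ} (x y : Fin k → ℝ) : ℕ → ℝ
  | 0 => ang x y
  | (i + 1) => gfun (thetaBar x y i)

/-- `h̃_{x,y}` for a `d`-layer network. -/
def htil {k : ℕ} (d : ℕ) (x y : Fin k → ℝ) : Fin k → ℝ :=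
  (((2 : ℝ) ^ d)⁻¹ * ∏ i ∈ Finset.range d, (π - thetaBar x y i) / π) • y
    + (((2 : ℝ) ^ d)⁻¹ * ∑ i ∈ Finset.range d, (Real.sin (thetaBar x y i) / π)
        * ∏ j ∈ Finset.Ico (i + 1) d, (π - thetaBar x y j) / π) •
        (enorm y • (enorm x)⁻¹ • x)

/-- `h_{x,y} = 2^{−d} x − h̃_{x,y}`. -/
def hfun {k : ℕ} (d : ℕ) (x y : Fin k → ℝ) : Fin k → ℝ :=
  ((2 : ℝ) ^ d)⁻¹ • x - htil d x y

/-- `θ̌_i` with `θ̌_0 = π`. -/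
def thetaCheck : ℕ → ℝ
  | 0 => π
  | (i + 1) => gfun (thetaCheck i)

/-- `ρ_d`. -/
def rho (d : ℕ) : ℝ :=
  ∑ i ∈ Finset.range d, (Real.sin (thetaCheck i) / π)
    * ∏ j ∈ Finset.Ico (i + 1) d, (π - thetaCheck j) / π

/-- The expected risk `f^E`. -/
def fE {k : ℕ} (d : ℕ) (xs : Fin k → ℝ) (x : Fin k → ℝ) : ℝ :=
  ((2 : ℝ) ^ (d + 1))⁻¹ * dotp x x - dotp x (htil d x xs)
    + ((2 : ℝ) ^ (d + 1))⁻¹ * dotp xs xs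

/-- Closed ball of radius `r` about `z` in the Euclidean norm. -/
def cball {k : ℕ} (z : Fin k → ℝ) (r : ℝ) : Set (Fin k → ℝ) :=
  {x | enorm (x - z) ≤ r}

/-- The set `S_β`. -/
def Sset {k : ℕ} (d : ℕ) (xs : Fin k → ℝ) (β : ℝ) : Set (Fin k → ℝ) :=
  {x | x ≠ 0 ∧ enorm (hfun d x xs) ≤ ((2 : ℝ) ^ d)⁻¹ * β * max (enorm x) (enorm xs)}


/-!
Write `Λ = ∏ W_{i,+,x}`, so that `G(x) = Λ x` and `ṽ_x = Λᵀ Aᵀ (A Λ x − y)`. If some layer of `x`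
vanishes then `Λ = 0` and `ṽ_x = 0`. Otherwise, along a ray `x + t u` the network is affine for
small `t > 0`, with slope a one-sided directional derivative. Differentiability makes that slope
odd in `u`, and since each `W_{i,+,x}` is injective by the WDC this forces the undecided ReLU
units to stay off, so the slope is `Λ u`. Hence `Λ ṽ_x` is a secant direction of `G`, the RRIC
applies to it, and
`‖ṽ_x‖² = ⟨A Λ ṽ_x, A G(x) − A G(x_*) − e⟩ ≤ (1 + ε) ‖Λ ṽ_x‖ (‖G(x)‖ + ‖G(x_*)‖ + ‖e‖)`.
The WDC bounds every layer map by `√(1/2 + ε)`, and `(1/2 + ε)^{d/2} ≤ 2 · 2^{-d/2}` as soon as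
`ε d ≤ 1/2`; together with the noise bound this gives `‖ṽ_x‖ ≤ 20 · 2^{-d} max(‖x‖, ‖x_*‖)`.
-/

section Euclidean

variable {k m : ℕ}

lemma enorm_eq_norm (v : Fin k → ℝ) : enorm v = ‖WithLp.toLp 2 v‖ := by
  simp only [EuclideanSpace.norm_eq, Real.norm_eq_abs, sq_abs]
  rfl

lemma dotp_eq_inner (u v : Fin k → ℝ) :
    dotp u v = inner ℝ (WithLp.toLp 2 u) (WithLp.toLp 2 v) := by
  simp [dotp, PiLp.inner_apply, mul_comm]

lemma enorm_nonneg (v : Fin k → ℝ) : 0 ≤ enorm v := Real.sqrt_nonneg _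

lemma enorm_smul_eq (t : ℝ) (v : Fin k → ℝ) : enorm (t • v) = |t| * enorm v := by
  simp only [enorm_eq_norm, WithLp.toLp_smul, norm_smul, Real.norm_eq_abs]

lemma enorm_eq_zero_iff {v : Fin k → ℝ} : enorm v = 0 ↔ v = 0 := by
  rw [enorm_eq_norm, norm_eq_zero, WithLp.toLp_eq_zero]

lemma dotp_self_eq (v : Fin k → ℝ) : dotp v v = enorm v ^ 2 := by
  rw [dotp_eq_inner, real_inner_self_eq_norm_sq, enorm_eq_norm]

lemma abs_dotp_le (u v : Fin k → ℝ) : |dotp u v| ≤ enorm u * enorm v := by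
  rw [dotp_eq_inner, enorm_eq_norm, enorm_eq_norm]
  exact abs_real_inner_le_norm _ _

lemma dotp_add_right (u v w : Fin k → ℝ) : dotp u (v + w) = dotp u v + dotp u w :=
  dotProduct_add u v w

lemma dotp_sub_right (u v w : Fin k → ℝ) : dotp u (v - w) = dotp u v - dotp u w :=
  dotProduct_sub u v w

lemma dotp_smul_left (t : ℝ) (u v : Fin k → ℝ) : dotp (t • u) v = t * dotp u v :=
  smul_dotProduct t u v

lemma dotp_smul_right (t : ℝ) (u v : Fin k → ℝ) : dotp u (t • v) = t * dotp u v :=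
  dotProduct_smul t u v

lemma dotp_transpose_mulVec (M : Matrix (Fin m) (Fin k) ℝ) (u : Fin k → ℝ) (w : Fin m → ℝ) :
    dotp u (Mᵀ *ᵥ w) = dotp (M *ᵥ u) w := by
  simp only [dotp, ← dotProduct.eq_1, dotProduct_mulVec, vecMul_transpose]

lemma enorm_mulVec_le (M : Matrix (Fin m) (Fin k) ℝ) (z : Fin k → ℝ) :
    enorm (M *ᵥ z) ≤ specNorm M * enorm z := by
  rw [enorm_eq_norm, enorm_eq_norm]
  exact (LinearMap.toContinuousLinearMap (Matrix.toEuclideanLin M)).le_opNorm (WithLp.toLp 2 z)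

end Euclidean

section WDC

variable {n k : ℕ} {W : Matrix (Fin n) (Fin k) ℝ} {ε : ℝ}

lemma WDC.nonneg (hW : WDC W ε) {x : Fin k → ℝ} (hx : x ≠ 0) : 0 ≤ ε :=
  (norm_nonneg _).trans (hW x x hx hx)

lemma Qmat_self {x : Fin k → ℝ} (hx : x ≠ 0) : Qmat x x = (1 / 2 : ℝ) • 1 := by
  have hx' : enorm x ≠ 0 := mt enorm_eq_zero_iff.mp hx
  have hang : ang x x = 0 := by
    rw [ang, dotp_self_eq, ← sq, div_self (pow_ne_zero 2 hx'), Real.arccos_one]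
  rw [Qmat, hang, Real.sin_zero, zero_div, zero_smul, add_zero, sub_zero,
    div_mul_cancel_right₀ Real.pi_ne_zero, one_div]

lemma posPart_zero : posPart W 0 = 0 := by
  ext i j
  simp [posPart, rowFilter]

lemma WDC.abs_enorm_posPart_mulVec_sq_sub_le (hW : WDC W ε) {x : Fin k → ℝ} (hx : x ≠ 0)
    (z : Fin k → ℝ) :
    |enorm (posPart W x *ᵥ z) ^ 2 - enorm z ^ 2 / 2| ≤ ε * enorm z ^ 2 := by
  have hquad : dotp z (((posPart W x)ᵀ * posPart W x - Qmat x x) *ᵥ z)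
      = enorm (posPart W x *ᵥ z) ^ 2 - enorm z ^ 2 / 2 := by
    rw [Qmat_self hx, sub_mulVec, ← mulVec_mulVec, smul_mulVec, one_mulVec, dotp_eq_inner,
      WithLp.toLp_sub, inner_sub_right, ← dotp_eq_inner, ← dotp_eq_inner, dotp_transpose_mulVec,
      dotp_self_eq, dotp_eq_inner, WithLp.toLp_smul, real_inner_smul_right, ← dotp_eq_inner,
      dotp_self_eq]
    ring
  rw [← hquad]
  calc _ ≤ enorm z * (specNorm ((posPart W x)ᵀ * posPart W x - Qmat x x) * enorm z) :=
      (abs_dotp_le _ _).trans (mul_le_mul_of_nonneg_left (enorm_mulVec_le _ z) (enorm_nonneg z))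
    _ ≤ ε * enorm z ^ 2 := by nlinarith [hW x x hx hx, sq_nonneg (enorm z)]

lemma WDC.enorm_posPart_mulVec_le (hW : WDC W ε) (x z : Fin k → ℝ) :
    enorm (posPart W x *ᵥ z) ≤ √(1 / 2 + ε) * enorm z := by
  rcases eq_or_ne x 0 with rfl | hx
  · rw [posPart_zero, zero_mulVec, enorm_eq_zero_iff.mpr rfl]
    exact mul_nonneg (Real.sqrt_nonneg _) (enorm_nonneg z)
  have hsq : enorm (posPart W x *ᵥ z) ^ 2 ≤ (1 / 2 + ε) * enorm z ^ 2 := by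
    linarith [(abs_le.mp (hW.abs_enorm_posPart_mulVec_sq_sub_le hx z)).2]
  calc enorm (posPart W x *ᵥ z) = √(enorm (posPart W x *ᵥ z) ^ 2) :=
        (Real.sqrt_sq (enorm_nonneg _)).symm
    _ ≤ √((1 / 2 + ε) * enorm z ^ 2) := Real.sqrt_le_sqrt hsq
    _ = √(1 / 2 + ε) * enorm z := by
        rw [Real.sqrt_mul' _ (sq_nonneg _), Real.sqrt_sq (enorm_nonneg z)]

lemma WDC.eq_zero_of_posPart_mulVec_eq_zero (hW : WDC W ε) (hε : ε < 1 / 2)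
    {x z : Fin k → ℝ} (hx : x ≠ 0) (hz : posPart W x *ᵥ z = 0) : z = 0 := by
  have h := (abs_le.mp (hW.abs_enorm_posPart_mulVec_sq_sub_le hx z)).1
  rw [hz, enorm_eq_zero_iff.mpr rfl] at h
  have : enorm z ^ 2 ≤ 0 := by nlinarith [sq_nonneg (enorm z)]
  exact enorm_eq_zero_iff.mp (pow_eq_zero_iff two_ne_zero |>.mp (le_antisymm this (sq_nonneg _)))

end WDC

section Network

variable {n : ℕ → ℕ} {W : ∀ i : ℕ, Matrix (Fin (n (i + 1))) (Fin (n i)) ℝ} {ε : ℝ} {d : ℕ}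

lemma rowFilter_mulVec_apply {a b : ℕ} (M : Matrix (Fin a) (Fin b) ℝ) (v : Fin a → ℝ)
    (z : Fin b → ℝ) (r : Fin a) :
    (rowFilter M v *ᵥ z) r = if 0 < v r then (M *ᵥ z) r else 0 := by
  split_ifs with h <;> simp [rowFilter, mulVec, dotProduct, h]

lemma relu_mulVec {a b : ℕ} (M : Matrix (Fin a) (Fin b) ℝ) (f : Fin b → ℝ) :
    relu (M *ᵥ f) = posPart M f *ᵥ f := by
  funext r
  rw [posPart, rowFilter_mulVec_apply, relu]
  split_ifs with h
  · exact max_eq_left h.le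
  · exact max_eq_right (not_lt.mp h)

lemma feat_succ (j : ℕ) (x : Fin (n 0) → ℝ) :
    feat n W (j + 1) x = posPart (W j) (feat n W j x) *ᵥ feat n W j x :=
  relu_mulVec _ _

lemma lam_succ (j : ℕ) (x : Fin (n 0) → ℝ) :
    lam n W (j + 1) x = posPart (W j) (feat n W j x) * lam n W j x := rfl

lemma lam_mulVec_self (j : ℕ) (x : Fin (n 0) → ℝ) : lam n W j x *ᵥ x = feat n W j x := by
  induction j with
  | zero => exact one_mulVec x
  | succ j ih => rw [lam_succ, ← mulVec_mulVec, ih, feat_succ]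

lemma feat_apply_zero (j : ℕ) : feat n W j 0 = 0 := by
  rw [← lam_mulVec_self, mulVec_zero]

lemma enorm_lam_mulVec_le (hW : ∀ i < d, WDC (W i) ε) (x u : Fin (n 0) → ℝ) {j : ℕ}
    (hj : j ≤ d) : enorm (lam n W j x *ᵥ u) ≤ √(1 / 2 + ε) ^ j * enorm u := by
  induction j with
  | zero => rw [pow_zero, one_mul]; exact (congrArg enorm (one_mulVec u)).le
  | succ j ih =>
    rw [lam_succ, ← mulVec_mulVec, pow_succ', mul_assoc]
    exact ((hW j hj).enorm_posPart_mulVec_le _ _).trans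
      (mul_le_mul_of_nonneg_left (ih (by omega)) (Real.sqrt_nonneg _))

lemma enorm_feat_le (hW : ∀ i < d, WDC (W i) ε) (x : Fin (n 0) → ℝ) :
    enorm (feat n W d x) ≤ √(1 / 2 + ε) ^ d * enorm x := by
  rw [← lam_mulVec_self]
  exact enorm_lam_mulVec_le hW x x le_rfl

lemma lam_eq_zero_of_feat_eq_zero {x : Fin (n 0) → ℝ} {l : ℕ} (hl : l < d)
    (h : feat n W l x = 0) : lam n W d x = 0 := by
  induction d, hl using Nat.le_induction with
  | base => rw [lam_succ, h, posPart_zero, Matrix.zero_mul]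
  | succ j _ ih => rw [lam_succ, ih, Matrix.mul_zero]

end Network

section Derivative

open Filter Topology

def reluDir (c a : ℝ) : ℝ := if 0 < c then a else if c < 0 then 0 else max a 0

lemma eventually_max_add_mul_eq (c a : ℝ) :
    ∀ᶠ t in 𝓝[>] (0 : ℝ), max (c + t * a) 0 = max c 0 + t * reluDir c a := by
  have hlim : Tendsto (fun t : ℝ => c + t * a) (𝓝[>] 0) (𝓝 c) := by
    have hcont : Continuous fun t : ℝ => c + t * a := by fun_prop
    simpa using (hcont.tendsto 0).mono_left nhdsWithin_le_nhds
  rcases lt_trichotomy 0 c with hc | rfl | hc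
  · filter_upwards [hlim.eventually (lt_mem_nhds hc)] with t ht
    simp [reluDir, hc, max_eq_left ht.le, max_eq_left hc.le]
  · filter_upwards [self_mem_nhdsWithin] with t (ht : 0 < t)
    simp [reluDir, mul_max_of_nonneg _ _ ht.le]
  · filter_upwards [hlim.eventually (gt_mem_nhds hc)] with t ht
    simp [reluDir, hc, hc.not_gt, max_eq_right ht.le, max_eq_right hc.le]

variable {n : ℕ → ℕ} {W : ∀ i : ℕ, Matrix (Fin (n (i + 1))) (Fin (n i)) ℝ} {ε : ℝ} {d : ℕ}
  {x : Fin (n 0) → ℝ}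

def featDir (n : ℕ → ℕ) (W : ∀ i : ℕ, Matrix (Fin (n (i + 1))) (Fin (n i)) ℝ)
    (x u : Fin (n 0) → ℝ) : (l : ℕ) → Fin (n l) → ℝ
  | 0 => u
  | l + 1 => fun r => reluDir ((W l *ᵥ feat n W l x) r) ((W l *ᵥ featDir n W x u l) r)

lemma eventually_feat_add_smul_eq (x u : Fin (n 0) → ℝ) (l : ℕ) :
    ∀ᶠ t in 𝓝[>] (0 : ℝ), feat n W l (x + t • u) = feat n W l x + t • featDir n W x u l := by
  induction l with
  | zero => exact Eventually.of_forall fun t => rfl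
  | succ l ih =>
    have hcoord := eventually_all.mpr fun r =>
      eventually_max_add_mul_eq ((W l *ᵥ feat n W l x) r) ((W l *ᵥ featDir n W x u l) r)
    filter_upwards [ih, hcoord] with t ht hr
    funext r
    simp only [feat, ht, mulVec_add, mulVec_smul, relu, Pi.add_apply, Pi.smul_apply, smul_eq_mul]
    exact hr r

lemma featDir_eq_fderiv (hG : DifferentiableAt ℝ (feat n W d) x) (u : Fin (n 0) → ℝ) :
    featDir n W x u d = fderiv ℝ (feat n W d) x u := by
  have hline : HasDerivAt (fun t : ℝ => x + t • u) u 0 := by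
    simpa using ((hasDerivAt_id (0 : ℝ)).smul_const u).const_add x
  have hG' : HasDerivAt (fun t : ℝ => feat n W d (x + t • u)) (fderiv ℝ (feat n W d) x u) 0 :=
    hG.hasFDerivAt.comp_hasDerivAt_of_eq (0 : ℝ) hline (by simp)
  have hray : HasDerivWithinAt (fun t : ℝ => feat n W d (x + t • u)) (featDir n W x u d)
      (Set.Ioi 0) 0 := by
    have hlin : HasDerivAt (fun t : ℝ => feat n W d x + t • featDir n W x u d)
        (featDir n W x u d) 0 := by
      simpa using ((hasDerivAt_id (0 : ℝ)).smul_const (featDir n W x u d)).const_add (feat n W d x)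
    exact hlin.hasDerivWithinAt.congr_of_eventuallyEq (eventually_feat_add_smul_eq x u d)
      (by simp)
  exact (uniqueDiffWithinAt_Ioi 0).eq_deriv _ hray hG'.hasDerivWithinAt

/-- Linearity of the derivative gives the identity at the top layer; injectivity of each
`W_{+,x}` (from the WDC) carries it down. -/
lemma featDir_add_featDir_neg_eq_zero (hW : ∀ i < d, WDC (W i) ε) (hε : ε < 1 / 2)
    (hx : ∀ l < d, feat n W l x ≠ 0) (hG : DifferentiableAt ℝ (feat n W d) x)
    (u : Fin (n 0) → ℝ) {l : ℕ} (hl : l ≤ d) :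
    featDir n W x u l + featDir n W x (-u) l = 0 := by
  induction hl using Nat.decreasingInduction with
  | self => rw [featDir_eq_fderiv hG, featDir_eq_fderiv hG, map_neg, add_neg_cancel]
  | of_succ l hl ih =>
    refine (hW l hl).eq_zero_of_posPart_mulVec_eq_zero hε (hx l hl) ?_
    funext r
    have hr := congrFun ih r
    rw [posPart, rowFilter_mulVec_apply]
    split_ifs with hc
    · simpa [featDir, reluDir, hc, mulVec_add] using hr
    · rfl

lemma reluDir_eq_ite_of_add_eq_zero {c a a' : ℝ} (h : reluDir c a + reluDir c a' = 0) :
    reluDir c a = if 0 < c then a else 0 := by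
  unfold reluDir at *
  split_ifs at * <;> first | rfl | linarith [le_max_right a 0, le_max_right a' 0]

lemma featDir_eq_lam_mulVec (hW : ∀ i < d, WDC (W i) ε) (hε : ε < 1 / 2)
    (hx : ∀ l < d, feat n W l x ≠ 0) (hG : DifferentiableAt ℝ (feat n W d) x)
    (u : Fin (n 0) → ℝ) {l : ℕ} (hl : l ≤ d) : featDir n W x u l = lam n W l x *ᵥ u := by
  induction l with
  | zero => exact (one_mulVec u).symm
  | succ l ih =>
    funext r
    rw [lam_succ, ← mulVec_mulVec, ← ih (by omega), posPart, rowFilter_mulVec_apply]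
    exact reluDir_eq_ite_of_add_eq_zero
      (congrFun (featDir_add_featDir_neg_eq_zero hW hε hx hG u hl) r)

lemma exists_feat_add_smul_sub_eq (hW : ∀ i < d, WDC (W i) ε) (hε : ε < 1 / 2)
    (hx : ∀ l < d, feat n W l x ≠ 0) (hG : DifferentiableAt ℝ (feat n W d) x)
    (u : Fin (n 0) → ℝ) :
    ∃ δ > (0 : ℝ), feat n W d (x + δ • u) - feat n W d x = δ • (lam n W d x *ᵥ u) := by
  obtain ⟨δ, hray, hδ⟩ := ((eventually_feat_add_smul_eq x u d).and self_mem_nhdsWithin).exists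
  refine ⟨δ, hδ, ?_⟩
  rw [hray, featDir_eq_lam_mulVec hW hε hx hG u le_rfl, add_sub_cancel_left]

end Derivative

section RRIC

variable {m p k : ℕ} {A : Matrix (Fin m) (Fin p) ℝ} {G : (Fin k → ℝ) → Fin p → ℝ} {ε δ : ℝ}
  {a b : Fin k → ℝ} {w : Fin p → ℝ}

lemma RRIC.abs_dotp_mulVec_sub_le (hA : RRIC A G ε) (hδ : 0 < δ) (hw : G a - G b = δ • w)
    (c c' : Fin k → ℝ) :
    |dotp (A *ᵥ w) (A *ᵥ (G c - G c')) - dotp w (G c - G c')|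
      ≤ ε * enorm w * enorm (G c - G c') := by
  have h := hA a b c c'
  rw [hw, mulVec_smul, dotp_smul_left, dotp_smul_left, ← mul_sub, abs_mul, abs_of_pos hδ,
    enorm_smul_eq, abs_of_pos hδ] at h
  exact le_of_mul_le_mul_left (h.trans_eq (by ring)) hδ

lemma RRIC.abs_dotp_mulVec_le (hA : RRIC A G ε) (hδ : 0 < δ) (hw : G a - G b = δ • w)
    (c c' : Fin k → ℝ) :
    |dotp (A *ᵥ w) (A *ᵥ (G c - G c'))| ≤ (1 + ε) * enorm w * enorm (G c - G c') := by
  linarith [hA.abs_dotp_mulVec_sub_le hδ hw c c', abs_dotp_le w (G c - G c'),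
    abs_sub_abs_le_abs_sub (dotp (A *ᵥ w) (A *ᵥ (G c - G c'))) (dotp w (G c - G c'))]

lemma RRIC.enorm_mulVec_le (hA : RRIC A G ε) (hε : 0 ≤ ε) (hδ : 0 < δ)
    (hw : G a - G b = δ • w) : enorm (A *ᵥ w) ≤ (1 + ε) * enorm w := by
  have h := hA.abs_dotp_mulVec_le hδ hw a b
  rw [hw, mulVec_smul, dotp_smul_right, dotp_self_eq, enorm_smul_eq, abs_mul, abs_of_pos hδ,
    abs_of_nonneg (sq_nonneg _)] at h
  have hsq : enorm (A *ᵥ w) ^ 2 ≤ (1 + ε) * enorm w ^ 2 :=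
    le_of_mul_le_mul_left (h.trans_eq (by ring)) hδ
  refine (pow_le_pow_iff_left₀ (enorm_nonneg _) (by positivity [enorm_nonneg w]) two_ne_zero).mp ?_
  nlinarith [sq_nonneg (enorm w)]

end RRIC

section Gradient

variable {m : ℕ} {n : ℕ → ℕ} {W : ∀ i : ℕ, Matrix (Fin (n (i + 1))) (Fin (n i)) ℝ} {d : ℕ}
  {A : Matrix (Fin m) (Fin (n d)) ℝ} {xs x : Fin (n 0) → ℝ} {e : Fin m → ℝ} {ε δ : ℝ}

lemma enorm_vtil_sq_le (hA : RRIC A (feat n W d) ε) (hε : 0 ≤ ε) (hδ : 0 < δ)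
    (hray : feat n W d (x + δ • vtil n W d A xs e x) - feat n W d x
      = δ • (lam n W d x *ᵥ vtil n W d A xs e x)) :
    enorm (vtil n W d A xs e x) ^ 2 ≤ (1 + ε) * enorm (lam n W d x *ᵥ vtil n W d A xs e x)
      * (enorm (feat n W d x) + enorm (feat n W d xs) + enorm e) := by
  set v := vtil n W d A xs e x
  set w := lam n W d x *ᵥ v
  have hv : enorm v ^ 2 = dotp (A *ᵥ w) (A *ᵥ feat n W d x)
      - dotp (A *ᵥ w) (A *ᵥ feat n W d xs) - dotp (A *ᵥ w) e := by
    rw [← dotp_self_eq]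
    conv_lhs => enter [2]; rw [show v = vtil n W d A xs e x from rfl, vtil]
    rw [dotp_transpose_mulVec, dotp_transpose_mulVec, lam_mulVec_self, dotp_sub_right,
      dotp_add_right]
    ring
  have h1 := hA.abs_dotp_mulVec_le hδ hray x 0
  have h2 := hA.abs_dotp_mulVec_le hδ hray xs 0
  have h3 : |dotp (A *ᵥ w) e| ≤ (1 + ε) * enorm w * enorm e :=
    (abs_dotp_le _ _).trans
      (mul_le_mul_of_nonneg_right (hA.enorm_mulVec_le hε hδ hray) (enorm_nonneg e))
  rw [feat_apply_zero, sub_zero] at h1 h2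
  rw [hv]
  linarith [(abs_le.mp h1).2, (abs_le.mp h2).1, (abs_le.mp h3).1]

lemma enorm_vtil_le (hW : ∀ i < d, WDC (W i) ε) (hA : RRIC A (feat n W d) ε) (hε : 0 ≤ ε)
    (hδ : 0 < δ) (hray : feat n W d (x + δ • vtil n W d A xs e x) - feat n W d x
      = δ • (lam n W d x *ᵥ vtil n W d A xs e x)) :
    enorm (vtil n W d A xs e x) ≤
      √(1 / 2 + ε) ^ d * ((1 + ε) * (enorm (feat n W d x) + enorm (feat n W d xs) + enorm e)) := by
  set v := vtil n W d A xs e x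
  have hS : 0 ≤ enorm (feat n W d x) + enorm (feat n W d xs) + enorm e := by
    have := enorm_nonneg (feat n W d x)
    have := enorm_nonneg (feat n W d xs)
    have := enorm_nonneg e
    positivity
  rcases (enorm_nonneg v).eq_or_lt with hv | hv
  · rw [← hv]
    positivity
  refine le_of_mul_le_mul_left ?_ hv
  calc enorm v * enorm v = enorm v ^ 2 := (sq _).symm
    _ ≤ (1 + ε) * enorm (lam n W d x *ᵥ v)
        * (enorm (feat n W d x) + enorm (feat n W d xs) + enorm e) :=
      enorm_vtil_sq_le hA hε hδ hray
    _ ≤ (1 + ε) * (√(1 / 2 + ε) ^ d * enorm v)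
        * (enorm (feat n W d x) + enorm (feat n W d xs) + enorm e) := by
      have := enorm_lam_mulVec_le hW x v le_rfl
      gcongr
    _ = enorm v * (√(1 / 2 + ε) ^ d
        * ((1 + ε) * (enorm (feat n W d x) + enorm (feat n W d xs) + enorm e))) := by ring

end Gradient

section Constants

lemma mul_natCast_le_half {ε : ℝ} {d : ℕ} (hd : 1 ≤ d) (hε : ε < (1 / (16 * π * d ^ 2)) ^ 2) :
    ε * d ≤ 1 / 2 := by
  have hd' : (1 : ℝ) ≤ d := by exact_mod_cast hd
  have h1 : 2 * (d : ℝ) ≤ 16 * π * d ^ 2 := by nlinarith [Real.pi_gt_three]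
  have h2 : 16 * π * (d : ℝ) ^ 2 ≤ (16 * π * d ^ 2) ^ 2 := by nlinarith
  have h3 : ε < 1 / (2 * d) := by
    rw [div_pow, one_pow] at hε
    exact hε.trans_le (one_div_le_one_div_of_le (by positivity) (h1.trans h2))
  calc ε * d ≤ 1 / (2 * d) * d := by gcongr
    _ = 1 / 2 := by field_simp

lemma rpow_natCast_div_two (d : ℕ) : (2 : ℝ) ^ ((d : ℝ) / 2) = √2 ^ d := by
  rw [Real.sqrt_eq_rpow, ← Real.rpow_natCast, ← Real.rpow_mul zero_le_two, one_div_mul_eq_div]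

lemma sqrt_half_add_pow_le {ε : ℝ} {d : ℕ} (hε : 0 ≤ ε) (hεd : ε * d ≤ 1 / 2) :
    √(1 / 2 + ε) ^ d ≤ 2 / √2 ^ d := by
  have hexp : (1 + 2 * ε) ^ d ≤ 2 ^ 2 :=
    calc (1 + 2 * ε) ^ d ≤ Real.exp (2 * ε) ^ d :=
          pow_le_pow_left₀ (by linarith) (by linarith [Real.add_one_le_exp (2 * ε)]) d
      _ = Real.exp (d * (2 * ε)) := (Real.exp_nat_mul _ d).symm
      _ ≤ Real.exp 1 := Real.exp_le_exp.mpr (by linarith)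
      _ ≤ 2 ^ 2 := by linarith [Real.exp_one_lt_d9]
  rw [le_div_iff₀ (by positivity), ← mul_pow, ← Real.sqrt_mul (by linarith),
    show (1 / 2 + ε) * 2 = 1 + 2 * ε by ring]
  refine (pow_le_pow_iff_left₀ (by positivity) zero_le_two two_ne_zero).mp ?_
  rwa [← pow_mul, mul_comm d 2, pow_mul, Real.sq_sqrt (by linarith)]

end Constants

theorem statement_8 :
    ∃ a5 a6 : ℝ, 0 < a5 ∧ 0 < a6 ∧
      ∀ (d : ℕ), 2 ≤ d → ∀ (n : ℕ → ℕ) (m : ℕ)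
        (W : ∀ i : ℕ, Matrix (Fin (n (i + 1))) (Fin (n i)) ℝ)
        (A : Matrix (Fin m) (Fin (n d)) ℝ)
        (xs : Fin (n 0) → ℝ), xs ≠ 0 → ∀ (e : Fin m → ℝ) (ε : ℝ),
        (∀ i < d, WDC (W i) ε) → RRIC A (feat n W d) ε →
        ε < (1 / (16 * π * (d : ℝ) ^ 2)) ^ 2 →
        enorm e ≤ a5 * ((2 : ℝ) ^ ((d : ℝ) / 2))⁻¹ * enorm xs →
        ∀ x : Fin (n 0) → ℝ, x ≠ 0 → DifferentiableAt ℝ (feat n W d) x →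
          enorm (vtil n W d A xs e x)
            ≤ a6 * (d : ℝ) / 2 ^ d * max (enorm x) (enorm xs) := by
  refine ⟨1, 10, one_pos, by norm_num, ?_⟩
  intro d hd n m W A xs hxs e ε hW hA hεd he x _ hG
  have hε : 0 ≤ ε := (hW 0 (by omega)).nonneg hxs
  replace hεd : ε * d ≤ 1 / 2 := mul_natCast_le_half (by omega) hεd
  have hd' : (2 : ℝ) ≤ d := by exact_mod_cast hd
  set M := max (enorm x) (enorm xs)
  set t := (√2 ^ d)⁻¹
  have hM : 0 ≤ M := le_max_of_le_left (enorm_nonneg x)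
  have ht : t ^ 2 = (2 ^ d)⁻¹ := by
    rw [inv_pow, ← pow_mul, mul_comm, pow_mul, Real.sq_sqrt zero_le_two]
  by_cases hdeg : ∃ l < d, feat n W l x = 0
  · obtain ⟨l, hl, h0⟩ := hdeg
    rw [vtil, lam_eq_zero_of_feat_eq_zero hl h0, transpose_zero, zero_mulVec,
      enorm_eq_zero_iff.mpr rfl]
    positivity
  push Not at hdeg
  obtain ⟨δ, hδ, hray⟩ :=
    exists_feat_add_smul_sub_eq hW (by nlinarith) hdeg hG (vtil n W d A xs e x)
  have hs : √(1 / 2 + ε) ^ d ≤ 2 * t := (sqrt_half_add_pow_le hε hεd).trans_eq (div_eq_mul_inv _ _)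
  have hfeat (y : Fin (n 0) → ℝ) (hy : enorm y ≤ M) : enorm (feat n W d y) ≤ 2 * t * M :=
    (enorm_feat_le hW y).trans (mul_le_mul hs hy (enorm_nonneg y) (by positivity))
  have he' : enorm e ≤ t * M := by
    rw [rpow_natCast_div_two, one_mul] at he
    exact he.trans (mul_le_mul_of_nonneg_left (le_max_right _ _) (by positivity))
  calc enorm (vtil n W d A xs e x)
      ≤ √(1 / 2 + ε) ^ d * ((1 + ε) * (enorm (feat n W d x) + enorm (feat n W d xs) + enorm e)) :=
        enorm_vtil_le hW hA hε hδ hray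
    _ ≤ 2 * t * ((1 + ε) * (2 * t * M + 2 * t * M + t * M)) := by
        refine mul_le_mul hs (mul_le_mul_of_nonneg_left ?_ (by linarith)) ?_ (by positivity)
        · linarith [hfeat x (le_max_left _ _), hfeat xs (le_max_right _ _)]
        · exact mul_nonneg (by linarith)
            (add_nonneg (add_nonneg (enorm_nonneg _) (enorm_nonneg _)) (enorm_nonneg _))
    _ = 10 * (1 + ε) * (2 ^ d)⁻¹ * M := by rw [← ht]; ring
    _ ≤ 10 * d * (2 ^ d)⁻¹ * M := by
        gcongr
        nlinarith
    _ = 10 * d / 2 ^ d * M := by rw [div_eq_mul_inv]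

end CSGen
end
end

section
/- There exists a universal constant a7 > 0 such that for all integers d ≥ 2, 1/(a7 (d + 2)²) ≤ 1 − ρ_d ≤ 250/(d + 1). Consequently, the infimum a8 = inf_{d ≥ 2} ρ_d is strictly positive. -/
open scoped BigOperators NNReal
open Real Finset Matrix
open scoped Matrix

noncomputable section

namespace CSGen

/-!
For `d ≥ 1` we have `ρ_d = cos θ̌_d`, and `y_d = 1 - cos θ̌_d` satisfies
`y_{d+1} = y_d - (sin θ - θ cos θ) / π` with `θ = θ̌_d ∈ (0, π]`. As `sin θ - θ cos θ` is of
order `θ³` and `y_d` of order `θ²`, the decrement lies between `y_d² / 100` and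
`(3/4) y_d^{3/2}` (the latter once `θ ≤ π/2`, i.e. `d ≥ 1`). The first bound makes `1 / y_d` grow
at least like `d / 100`, the second makes `1 / √y_d` grow at most like `3d/2`; this gives
`1 / (4 (d + 2)²) ≤ 1 - ρ_d ≤ 100 / (d + 50)`. Finally `θ̌` is decreasing, so
`ρ_d ≥ cos θ̌_2 = 1 / π` for `d ≥ 2`.
-/

theorem inv_add_mul_le_inv_of_le_mul_one_sub {y : ℕ → ℝ} {c : ℝ} (hpos : ∀ n, 0 < y n)
    (hstep : ∀ n, y (n + 1) ≤ y n * (1 - c * y n)) (n : ℕ) :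
    (y 0)⁻¹ + c * n ≤ (y n)⁻¹ := by
  induction n with
  | zero => simp
  | succ n ih =>
    have hy := hpos n
    have hy' := hpos (n + 1)
    have hnext : (y n)⁻¹ + c ≤ (y (n + 1))⁻¹ := by
      rw [show (y n)⁻¹ + c = (1 + c * y n) / y n by field_simp, inv_eq_one_div,
        div_le_div_iff₀ hy hy', one_mul]
      rcases le_or_gt 0 (1 + c * y n) with h | h
      · nlinarith [mul_le_mul_of_nonneg_right (hstep n) h, sq_nonneg (c * y n)]
      · nlinarith
    push_cast
    linarith

theorem inv_le_inv_add_mul_of_sq_mul_one_sub_le {s : ℕ → ℝ} {C : ℝ} (hC : 0 ≤ C)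
    (hpos : ∀ n, 0 < s n) (hsmall : ∀ n, C * s n ≤ 3 / 4)
    (hstep : ∀ n, s n ^ 2 * (1 - C * s n) ≤ s (n + 1) ^ 2) (n : ℕ) :
    (s n)⁻¹ ≤ (s 0)⁻¹ + 2 * C * n := by
  induction n with
  | zero => simp
  | succ n ih =>
    have hs := hpos n
    have hs' := hpos (n + 1)
    have hx : 0 ≤ C * s n := by positivity
    -- `(1 - x) (1 + 2x)² = 1 + x (3 - 4x²)`
    have hpoly : 1 ≤ (1 - C * s n) * (1 + 2 * C * s n) ^ 2 := by
      nlinarith [mul_nonneg hx (by nlinarith [hsmall n] : 0 ≤ 3 - 4 * (C * s n) ^ 2)]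
    have hsq : s n ^ 2 ≤ (s (n + 1) * (1 + 2 * C * s n)) ^ 2 := calc
      s n ^ 2 ≤ s n ^ 2 * ((1 - C * s n) * (1 + 2 * C * s n) ^ 2) :=
        le_mul_of_one_le_right (by positivity) hpoly
      _ = s n ^ 2 * (1 - C * s n) * (1 + 2 * C * s n) ^ 2 := by ring
      _ ≤ (s (n + 1) * (1 + 2 * C * s n)) ^ 2 := by
        rw [mul_pow]; exact mul_le_mul_of_nonneg_right (hstep n) (sq_nonneg _)
    have hle : s n ≤ s (n + 1) * (1 + 2 * C * s n) :=
      (pow_le_pow_iff_left₀ hs.le (by positivity) two_ne_zero).1 hsq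
    have hnext : (s (n + 1))⁻¹ ≤ (s n)⁻¹ + 2 * C := by
      rw [show (s n)⁻¹ + 2 * C = (1 + 2 * C * s n) / s n by field_simp, inv_eq_one_div,
        div_le_div_iff₀ hs' hs]
      linarith
    push_cast
    linarith

theorem sin_sub_mul_cos_le {θ : ℝ} (hθ : 0 ≤ θ) : sin θ - θ * cos θ ≤ θ ^ 3 / 2 := by
  nlinarith [sin_le hθ, one_sub_sq_div_two_le_cos (x := θ)]

theorem sin_sub_mul_cos_lt_pi_mul_one_sub_cos {θ : ℝ} (h0 : 0 < θ) (hπ : θ ≤ π) :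
    sin θ - θ * cos θ < π * (1 - cos θ) := by
  nlinarith [sin_lt h0, cos_le_one θ]

theorem pow_three_div_thirty_le_sin_sub_mul_cos {θ : ℝ} (h0 : 0 ≤ θ) (hπ : θ ≤ π) :
    θ ^ 3 / 30 ≤ sin θ - θ * cos θ := by
  -- `sin θ ≥ θ - θ³/6` and Jordan's `cos θ ≤ 1 - 2θ²/π²`, with `2/π² - 1/6 ≥ 1/5 - 1/6`
  have hsin := sin_ge_sub_cube h0
  have hcos := cos_le_one_sub_mul_cos_sq (x := θ) (by rwa [abs_of_nonneg h0])
  have hπ2 : 1 / 5 ≤ 2 / π ^ 2 := by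
    rw [div_le_div_iff₀ (by norm_num) (by positivity)]
    nlinarith [pi_lt_d2, pi_pos]
  nlinarith [pow_nonneg h0 3, mul_le_mul_of_nonneg_left hcos h0]

theorem sq_div_two_sub_pow_four_div_le_one_sub_cos {θ : ℝ} (h0 : 0 ≤ θ) :
    θ ^ 2 / 2 - θ ^ 4 / 24 ≤ 1 - cos θ := by
  rcases le_or_gt (θ ^ 2) 12 with h | h
  · have hsin := sin_ge_sub_cube (x := θ / 2) (by positivity)
    have hpos : 0 ≤ θ / 2 - (θ / 2) ^ 3 / 6 := by nlinarith
    have hhalf : 1 - cos θ = 2 * sin (θ / 2) ^ 2 := by rw [sin_sq_eq_half_sub]; ring_nf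
    nlinarith [pow_le_pow_left₀ hpos hsin 2, pow_nonneg h0 6]
  · nlinarith [cos_le_one θ]

theorem one_sub_cos_sq_div_hundred_le {θ : ℝ} (h0 : 0 ≤ θ) (hπ : θ ≤ π) :
    (1 - cos θ) ^ 2 / 100 ≤ (sin θ - θ * cos θ) / π := by
  have hy : 0 ≤ 1 - cos θ := by linarith [cos_le_one θ]
  have hy2 : (1 - cos θ) ^ 2 ≤ (θ ^ 2 / 2) ^ 2 :=
    pow_le_pow_left₀ hy (by linarith [one_sub_sq_div_two_le_cos (x := θ)]) 2
  have hΔ := pow_three_div_thirty_le_sin_sub_mul_cos h0 hπ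
  rw [div_le_div_iff₀ (by norm_num) pi_pos]
  nlinarith [pi_lt_d2, pi_pos, pow_nonneg h0 3, mul_le_mul_of_nonneg_left hπ (pow_nonneg h0 3)]

theorem sin_sub_mul_cos_div_pi_le {θ : ℝ} (h0 : 0 ≤ θ) (hπ : θ ≤ π / 2) :
    (sin θ - θ * cos θ) / π ≤ 3 / 4 * √(1 - cos θ) ^ 3 := by
  set s := √(1 - cos θ)
  have hs : s ^ 2 = 1 - cos θ := sq_sqrt (by linarith [cos_le_one θ])
  have hθ2 : θ ^ 2 ≤ 3 := by nlinarith [pi_lt_d2]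
  -- `1 - cos θ ≥ θ²/2 - θ⁴/24 ≥ (3/8) θ²` as `θ² ≤ 3`, and `(33/20)² ≥ 8/3`
  have hθs2 : θ ^ 2 ≤ (33 / 20 * s) ^ 2 := by
    nlinarith [sq_div_two_sub_pow_four_div_le_one_sub_cos h0]
  have hθs : θ ≤ 33 / 20 * s :=
    (pow_le_pow_iff_left₀ h0 (by positivity) two_ne_zero).1 hθs2
  have hθs3 := pow_le_pow_left₀ h0 hθs 3
  rw [div_le_iff₀ pi_pos]
  nlinarith [sin_sub_mul_cos_le h0, pi_gt_three, pow_nonneg (sqrt_nonneg (1 - cos θ)) 3]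

theorem thetaCheck_zero : thetaCheck 0 = π := rfl

theorem thetaCheck_succ (d : ℕ) :
    thetaCheck (d + 1) = arccos (cos (thetaCheck d)
      + (sin (thetaCheck d) - thetaCheck d * cos (thetaCheck d)) / π) := by
  show gfun _ = _
  unfold gfun
  congr 1
  field_simp
  ring

theorem thetaCheck_mem_Ioc (d : ℕ) : thetaCheck d ∈ Set.Ioc 0 π := by
  induction d with
  | zero => exact ⟨pi_pos, le_rfl⟩
  | succ d ih =>
    rw [thetaCheck_succ]
    refine ⟨arccos_pos.2 ?_, arccos_le_pi _⟩
    have := sin_sub_mul_cos_lt_pi_mul_one_sub_cos ih.1 ih.2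
    rw [← lt_sub_iff_add_lt', div_lt_iff₀ pi_pos]
    linarith

theorem cos_thetaCheck_succ (d : ℕ) :
    cos (thetaCheck (d + 1)) = cos (thetaCheck d)
      + (sin (thetaCheck d) - thetaCheck d * cos (thetaCheck d)) / π := by
  obtain ⟨h0, hπ⟩ := thetaCheck_mem_Ioc d
  have hΔ := (pow_three_div_thirty_le_sin_sub_mul_cos h0.le hπ).trans' (by positivity)
  have hlt := sin_sub_mul_cos_lt_pi_mul_one_sub_cos h0 hπ
  rw [thetaCheck_succ, cos_arccos]
  · nlinarith [neg_one_le_cos (thetaCheck d), div_nonneg hΔ pi_pos.le]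
  · rw [← le_sub_iff_add_le', div_le_iff₀ pi_pos]
    linarith

theorem thetaCheck_antitone : Antitone thetaCheck := by
  refine antitone_nat_of_succ_le fun d => ?_
  obtain ⟨h0, hπ⟩ := thetaCheck_mem_Ioc d
  have hΔ := (pow_three_div_thirty_le_sin_sub_mul_cos h0.le hπ).trans' (by positivity)
  rw [thetaCheck_succ]
  conv_rhs => rw [← arccos_cos h0.le hπ]
  exact arccos_le_arccos (le_add_of_nonneg_right (div_nonneg hΔ pi_pos.le))

theorem thetaCheck_one : thetaCheck 1 = π / 2 := by
  rw [thetaCheck_succ, thetaCheck_zero]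
  simp [pi_ne_zero]

theorem cos_thetaCheck_two : cos (thetaCheck 2) = 1 / π := by
  simp [cos_thetaCheck_succ, thetaCheck_one]

theorem rho_succ (d : ℕ) :
    rho (d + 1) = rho d * ((π - thetaCheck d) / π) + sin (thetaCheck d) / π := by
  unfold rho
  rw [sum_range_succ, Ico_self, prod_empty, mul_one, sum_mul]
  congr 1
  refine sum_congr rfl fun i hi => ?_
  rw [prod_Ico_succ_top (Nat.succ_le_of_lt (mem_range.1 hi))]
  ring

theorem rho_eq_cos_thetaCheck {d : ℕ} (hd : 1 ≤ d) : rho d = cos (thetaCheck d) := by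
  induction d, hd using Nat.le_induction with
  | base =>
    rw [rho_succ, thetaCheck_one, thetaCheck_zero]
    simp
  | succ d _ ih =>
    rw [rho_succ, ih, cos_thetaCheck_succ]
    field_simp
    ring

theorem one_sub_cos_thetaCheck_pos (d : ℕ) : 0 < 1 - cos (thetaCheck d) := by
  obtain ⟨h0, hπ⟩ := thetaCheck_mem_Ioc d
  linarith [cos_lt_cos_of_nonneg_of_le_pi le_rfl hπ h0, cos_zero]

theorem one_sub_cos_thetaCheck_le (d : ℕ) : 1 - cos (thetaCheck d) ≤ 100 / (d + 50) := by
  have hstep (n : ℕ) : 1 - cos (thetaCheck (n + 1))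
      ≤ (1 - cos (thetaCheck n)) * (1 - 1 / 100 * (1 - cos (thetaCheck n))) := by
    obtain ⟨h0, hπ⟩ := thetaCheck_mem_Ioc n
    rw [cos_thetaCheck_succ]
    linarith [one_sub_cos_sq_div_hundred_le h0.le hπ]
  have hrate := inv_add_mul_le_inv_of_le_mul_one_sub one_sub_cos_thetaCheck_pos hstep d
  rw [thetaCheck_zero, cos_pi] at hrate
  have hpos := one_sub_cos_thetaCheck_pos d
  have h := mul_le_mul_of_nonneg_left hrate hpos.le
  rw [mul_inv_cancel₀ hpos.ne'] at h
  rw [le_div_iff₀ (by positivity)]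
  linarith

theorem one_div_le_one_sub_cos_thetaCheck {d : ℕ} (hd : 1 ≤ d) :
    1 / (4 * ((d : ℝ) + 2) ^ 2) ≤ 1 - cos (thetaCheck d) := by
  set s : ℕ → ℝ := fun n => √(1 - cos (thetaCheck (n + 1)))
  have hsq (n : ℕ) : s n ^ 2 = 1 - cos (thetaCheck (n + 1)) :=
    sq_sqrt (one_sub_cos_thetaCheck_pos _).le
  have hpos (n : ℕ) : 0 < s n := sqrt_pos.2 (one_sub_cos_thetaCheck_pos _)
  have hmem (n : ℕ) : thetaCheck (n + 1) ∈ Set.Icc 0 (π / 2) :=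
    ⟨(thetaCheck_mem_Ioc _).1.le, thetaCheck_one ▸ thetaCheck_antitone (by omega)⟩
  have hsmall (n : ℕ) : 3 / 4 * s n ≤ 3 / 4 := by
    have hcos : 0 ≤ cos (thetaCheck (n + 1)) :=
      cos_nonneg_of_mem_Icc ⟨by linarith [(hmem n).1, pi_pos], (hmem n).2⟩
    have : s n ≤ 1 := sqrt_le_one.2 (by linarith)
    linarith
  have hstep (n : ℕ) : s n ^ 2 * (1 - 3 / 4 * s n) ≤ s (n + 1) ^ 2 := by
    have hΔ : _ ≤ 3 / 4 * s n ^ 3 := sin_sub_mul_cos_div_pi_le (hmem n).1 (hmem n).2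
    rw [hsq (n + 1), cos_thetaCheck_succ (n + 1)]
    linarith [hsq n]
  obtain ⟨n, rfl⟩ : ∃ n, d = n + 1 := ⟨d - 1, by omega⟩
  have hrate := inv_le_inv_add_mul_of_sq_mul_one_sub_le (by norm_num) hpos hsmall hstep n
  have hs0 : s 0 = 1 := by simp [s, thetaCheck_one]
  rw [hs0, inv_one, inv_le_iff_one_le_mul₀ (hpos n)] at hrate
  rw [← hsq, div_le_iff₀ (by positivity)]
  push_cast
  nlinarith [hpos n]

theorem one_div_pi_le_rho {d : ℕ} (hd : 2 ≤ d) : 1 / π ≤ rho d := by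
  rw [rho_eq_cos_thetaCheck (by omega), ← cos_thetaCheck_two]
  exact cos_le_cos_of_nonneg_of_le_pi (thetaCheck_mem_Ioc d).1.le (thetaCheck_mem_Ioc 2).2
    (thetaCheck_antitone hd)

theorem statement_12 :
    (∃ a7 : ℝ, 0 < a7 ∧ ∀ d : ℕ, 2 ≤ d →
      1 / (a7 * ((d : ℝ) + 2) ^ 2) ≤ 1 - rho d ∧ 1 - rho d ≤ 250 / ((d : ℝ) + 1))
    ∧ 0 < ⨅ d : {d : ℕ // 2 ≤ d}, rho d := by
  refine ⟨⟨4, by norm_num, fun d hd => ?_⟩, ?_⟩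
  · rw [rho_eq_cos_thetaCheck (by omega)]
    refine ⟨one_div_le_one_sub_cos_thetaCheck (by omega), ?_⟩
    refine (one_sub_cos_thetaCheck_le d).trans ?_
    rw [div_le_div_iff₀ (by positivity) (by positivity)]
    linarith [(Nat.cast_nonneg d : (0 : ℝ) ≤ d)]
  · exact (one_div_pos.2 pi_pos).trans_le (le_ciInf fun d => one_div_pi_le_rho d.2)

end CSGen
end
end
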